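/- The functor P : SOp → LT from symmetric operads to Lawvere theories is left adjoint to the functor Q : LT → SOp, with unit η_O : O → Q(P(O)) sending g ∈ O_n to the span (id_n, !, g) and counit ε_T : P(Q(T)) → T sending a span (φ, f, (g_i)_{i≤m}) to (g_1 × ... × g_m) ∘ π_φ; furthermore η_O is injective, so P is faithful. -/

import Mathlib

/-- One step of the lexicographic decomposition of a sigma of `Fin`s. -/
def finSigmaSucc {k : ℕ} (ns : Fin (k + 1) → ℕ) :
    (Σ i : Fin (k + 1), Fin (ns i)) ≃ (Fin (ns 0) ⊕ Σ i : Fin k, Fin (ns i.succ)) where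
  toFun p := Fin.cases (motive := fun i => Fin (ns i) → Fin (ns 0) ⊕ Σ i : Fin k, Fin (ns i.succ))
      (fun j => Sum.inl j) (fun i j => Sum.inr ⟨i, j⟩) p.1 p.2
  invFun q := q.elim (fun j => ⟨0, j⟩) (fun q => ⟨q.1.succ, q.2⟩)
  left_inv := by rintro ⟨i, j⟩; induction i using Fin.cases <;> simp
  right_inv := by rintro (j | ⟨i, j⟩) <;> simp

/-- The lexicographic identification of `Σ i, Fin (ns i)` with `Fin (∑ i, ns i)`. -/
def finSigma : ∀ {k : ℕ} (ns : Fin k → ℕ), (Σ i : Fin k, Fin (ns i)) ≃ Fin (∑ i, ns i)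
  | 0, ns => (Equiv.equivOfIsEmpty _ _ : (Σ i : Fin 0, Fin (ns i)) ≃ Fin 0).trans
      (finCongr (by simp))
  | k + 1, ns =>
    (finSigmaSucc ns).trans <|
      ((Equiv.refl (Fin (ns 0))).sumCongr (finSigma fun i => ns i.succ)).trans <|
        finSumFinEquiv.trans (finCongr (Fin.sum_univ_succ ns).symm)

/-- Operadic composition of permutations: on the lexicographic block decomposition,
`⟨i, r⟩ ↦ ⟨τ i, σs (τ i) r⟩`. -/
def symComp {k : ℕ} (ns : Fin k → ℕ) (σs : ∀ i, Equiv.Perm (Fin (ns i)))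
    (τ : Equiv.Perm (Fin k)) : Equiv.Perm (Fin (∑ i, ns i)) :=
  (finCongr (Equiv.sum_comp τ ns)).symm.trans <|
    ((finSigma fun i => ns (τ i)).symm.trans
      ((Equiv.sigmaCongr τ fun i => σs (τ i)).trans (finSigma ns)))

/-- A symmetric operad. -/
structure SymOperad where
  ops : ℕ → Type
  unit : ops 1
  comp : ∀ {k : ℕ} (ns : Fin k → ℕ), (∀ i, ops (ns i)) → ops k → ops (∑ i, ns i)
  act : ∀ {n : ℕ}, Equiv.Perm (Fin n) → ops n → ops n
  act_one : ∀ {n : ℕ} (x : ops n), act (Equiv.refl (Fin n)) x = x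
  act_mul : ∀ {n : ℕ} (σ τ : Equiv.Perm (Fin n)) (x : ops n),
    act (σ * τ) x = act σ (act τ x)
  comp_unit_left : ∀ {n : ℕ} (g : ops n),
    HEq (comp (fun _ : Fin n => 1) (fun _ => unit) g) g
  comp_unit_right : ∀ {n : ℕ} (g : ops n),
    HEq (comp (fun _ : Fin 1 => n) (fun _ => g) unit) g
  comp_assoc : ∀ {k : ℕ} (ns : Fin k → ℕ) (ms : ∀ i, Fin (ns i) → ℕ)
    (hs : ∀ i j, ops (ms i j)) (gs : ∀ i, ops (ns i)) (f : ops k),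
    HEq (comp (fun p => ms ((finSigma ns).symm p).1 ((finSigma ns).symm p).2)
          (fun p => hs ((finSigma ns).symm p).1 ((finSigma ns).symm p).2)
          (comp ns gs f))
        (comp (fun i => ∑ j, ms i j) (fun i => comp (ms i) (hs i) (gs i)) f)
  equiv_inner : ∀ {k : ℕ} (ns : Fin k → ℕ) (σs : ∀ i, Equiv.Perm (Fin (ns i)))
    (gs : ∀ i, ops (ns i)) (f : ops k),
    comp ns (fun i => act (σs i) (gs i)) f
      = act (symComp ns σs (Equiv.refl (Fin k))) (comp ns gs f)
  equiv_outer : ∀ {k : ℕ} (ns : Fin k → ℕ) (τ : Equiv.Perm (Fin k))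
    (gs : ∀ i, ops (ns i)) (f : ops k),
    HEq (comp (fun i => ns (τ i)) (fun i => gs (τ i)) (act τ f))
        (act (symComp ns (fun i => Equiv.refl (Fin (ns i))) τ) (comp ns gs f))

/-- Composition `a ∗ b` of unary operations of an operad. -/
def SymOperad.comp1 (O : SymOperad) (a b : O.ops 1) : O.ops 1 :=
  cast (congrArg O.ops (by simp)) (O.comp (fun _ : Fin 1 => 1) (fun _ => a) b)

/-- Composition `⟨c 1, …, c r⟩ ∗ h` of an `r`-ary operation with unary operations. -/
def SymOperad.unaryComp (O : SymOperad) {r : ℕ} (c : Fin r → O.ops 1) (h : O.ops r) :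
    O.ops r :=
  cast (congrArg O.ops (by simp)) (O.comp (fun _ : Fin r => 1) c h)
/-- A Lawvere theory: a category with objects the natural numbers where `n` is the
`n`-fold power of `1` with chosen projections.  `comp f g` is `f` followed by `g`. -/
structure LawTheory where
  Hom : ℕ → ℕ → Type
  id : ∀ n : ℕ, Hom n n
  comp : ∀ {a b c : ℕ}, Hom a b → Hom b c → Hom a c
  id_comp : ∀ {a b : ℕ} (f : Hom a b), comp (id a) f = f
  comp_id : ∀ {a b : ℕ} (f : Hom a b), comp f (id b) = f
  assoc : ∀ {a b c d : ℕ} (f : Hom a b) (g : Hom b c) (h : Hom c d),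
    comp (comp f g) h = comp f (comp g h)
  proj : ∀ (n : ℕ), Fin n → Hom n 1
  tuple : ∀ {a n : ℕ}, (Fin n → Hom a 1) → Hom a n
  tuple_proj : ∀ {a n : ℕ} (fs : Fin n → Hom a 1) (i : Fin n),
    comp (tuple fs) (proj n i) = fs i
  tuple_eta : ∀ {a n : ℕ} (g : Hom a n),
    tuple (fun i => comp g (proj n i)) = g

namespace LawTheory

variable (T : LawTheory)

/-- The structural morphism `π_φ : n → m` induced by a function `φ : (m] → (n]`. -/
def pi {n m : ℕ} (φ : Fin m → Fin n) : T.Hom n m :=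
  T.tuple fun i => T.proj n (φ i)

/-- The product map `f₁ × ⋯ × f_k : ∑ ns i → k` of operations `fs i : ns i → 1`,
formed via the chosen projections and the lexicographic block decomposition. -/
def prodMap {k : ℕ} (ns : Fin k → ℕ) (fs : ∀ i, T.Hom (ns i) 1) :
    T.Hom (∑ i, ns i) k :=
  T.tuple fun i => T.comp (T.pi fun j : Fin (ns i) => finSigma ns ⟨i, j⟩) (fs i)

/-- Operadic composition of the operations of a Lawvere theory:
`⟨f₁,…,f_k⟩ ∗ f = f ∘ (f₁ × ⋯ × f_k)`. -/
def opComp {k : ℕ} (ns : Fin k → ℕ) (fs : ∀ i, T.Hom (ns i) 1) (f : T.Hom k 1) :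
    T.Hom (∑ i, ns i) 1 :=
  T.comp (T.prodMap ns fs) f

/-- The action `σ · f = f ∘ π_σ` of a permutation on an operation. -/
def opAct {n : ℕ} (σ : Equiv.Perm (Fin n)) (f : T.Hom n 1) : T.Hom n 1 :=
  T.comp (T.pi ⇑σ) f

/-- A morphism `f : a → b` is invertible (an isomorphism). -/
def IsInvertible {a b : ℕ} (f : T.Hom a b) : Prop :=
  ∃ g : T.Hom b a, T.comp f g = T.id a ∧ T.comp g f = T.id b

/-- Structural morphisms: the closure under isomorphism of the image of the unique
interpretation from the initial Lawvere theory `𝔽ᵒᵖ`. -/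
def Structural {n m : ℕ} (f : T.Hom n m) : Prop :=
  ∃ (φ : Fin m → Fin n) (u : T.Hom n n) (v : T.Hom m m),
    T.IsInvertible u ∧ T.IsInvertible v ∧ f = T.comp u (T.comp (T.pi φ) v)

/-- `e` is left orthogonal to `m`: unique diagonal fillers exist. -/
def Orthogonal {a b c d : ℕ} (e : T.Hom a b) (m : T.Hom c d) : Prop :=
  ∀ (u : T.Hom a c) (v : T.Hom b d), T.comp u m = T.comp e v →
    ∃! w : T.Hom b c, T.comp e w = u ∧ T.comp w m = v

/-- Analytic morphisms: those right orthogonal to all structural morphisms. -/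
def Analytic {c d : ℕ} (f : T.Hom c d) : Prop :=
  ∀ {a b : ℕ} (e : T.Hom a b), T.Structural e → T.Orthogonal e f

/-- The canonical map `ρ_n : S_n × Aut(1)ⁿ → Hom(n,n)`,
`(σ, a) ↦ (a₁ × ⋯ × a_n) ∘ π_σ`. -/
def rho (n : ℕ)
    (p : Equiv.Perm (Fin n) × (Fin n → {f : T.Hom 1 1 // T.IsInvertible f})) :
    T.Hom n n :=
  T.comp (T.pi ⇑p.1) (T.tuple fun i => T.comp (T.proj n i) (p.2 i).1)

/-- `T` has simple automorphisms: each `ρ_n` is a bijection onto the automorphisms. -/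
def HasSimpleAut : Prop :=
  ∀ n : ℕ, Function.Injective (T.rho n) ∧
    Set.range (T.rho n) = {f : T.Hom n n | T.IsInvertible f}

/-- `T` is an analytic Lawvere theory: structural and analytic morphisms form a
factorization system and `T` has simple automorphisms. -/
def IsAnalyticTheory : Prop :=
  (∀ {n m : ℕ} (f : T.Hom n m), ∃ (k : ℕ) (e : T.Hom n k) (g : T.Hom k m),
      T.Structural e ∧ T.Analytic g ∧ f = T.comp e g) ∧ T.HasSimpleAut

end LawTheory

/-- A morphism of symmetric operads. -/
structure OperadHom (O O' : SymOperad) where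
  map : ∀ n : ℕ, O.ops n → O'.ops n
  map_unit : map 1 O.unit = O'.unit
  map_comp : ∀ {k : ℕ} (ns : Fin k → ℕ) (gs : ∀ i, O.ops (ns i)) (f : O.ops k),
    map _ (O.comp ns gs f) = O'.comp ns (fun i => map _ (gs i)) (map k f)
  map_act : ∀ {n : ℕ} (σ : Equiv.Perm (Fin n)) (x : O.ops n),
    map n (O.act σ x) = O'.act σ (map n x)

/-- An interpretation of Lawvere theories: an identity-on-objects functor
preserving the chosen projections. -/
structure LawHom (T T' : LawTheory) where
  map : ∀ {a b : ℕ}, T.Hom a b → T'.Hom a b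
  map_id : ∀ n : ℕ, map (T.id n) = T'.id n
  map_comp : ∀ {a b c : ℕ} (f : T.Hom a b) (g : T.Hom b c),
    map (T.comp f g) = T'.comp (map f) (map g)
  map_proj : ∀ (n : ℕ) (i : Fin n), map (T.proj n i) = T'.proj n i

/-- `S` is the symmetric operad of operations of the Lawvere theory `T`. -/
def IsOperadOf (T : LawTheory) (S : SymOperad) : Prop :=
  S.ops = (fun n => T.Hom n 1) ∧ HEq S.unit (T.id 1) ∧
    HEq (@SymOperad.comp S) (@LawTheory.opComp T) ∧
    HEq (@SymOperad.act S) (@LawTheory.opAct T)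
/-- A span `(φ, f, (g_i))` with codomain component `1`: an operation of the span
Lawvere theory `P(O)`, given by an arity `r`, a function leg `φ : (r] → (n]` and an
operation `g ∈ O_r`. -/
def PreOp (O : SymOperad) (n : ℕ) : Type := Σ r : ℕ, (Fin r → Fin n) × O.ops r

/-- Equivalence of spans: `(φ, g) ∼ (φ ∘ σ, σ⁻¹ · g)`. -/
def PreRel (O : SymOperad) (n : ℕ) : PreOp O n → PreOp O n → Prop := fun x y =>
  ∃ σ : Equiv.Perm (Fin x.1), y = ⟨x.1, x.2.1 ∘ ⇑σ, O.act σ⁻¹ x.2.2⟩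

/-- Morphism components of the span Lawvere theory: equivalence classes of spans. -/
def SpanOp (O : SymOperad) (n : ℕ) : Type := Quot (PreRel O n)

/-- Composition of spans: pullback of the monotone leg along the function leg
together with operadic composition. -/
def compPre (O : SymOperad) {n m : ℕ} (x : PreOp O m) (y : Fin m → PreOp O n) :
    PreOp O n :=
  ⟨∑ l, (y (x.2.1 l)).1,
   fun p => (y (x.2.1 ((finSigma _).symm p).1)).2.1 ((finSigma _).symm p).2,
   O.comp (fun l => (y (x.2.1 l)).1) (fun l => (y (x.2.1 l)).2.2) x.2.2⟩

/-- An identification of a Lawvere theory `T` with the span Lawvere theory `P(O)`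
of a symmetric operad `O`: morphisms `n → m` are `m`-tuples of equivalence classes
of spans, and identities, projections, tupling and composition are computed by the
span formulas. -/
structure SpanModel (O : SymOperad) (T : LawTheory) where
  e : ∀ {n m : ℕ}, T.Hom n m ≃ (Fin m → SpanOp O n)
  id_eq : ∀ n : ℕ, e (T.id n) = fun i => Quot.mk _ ⟨1, fun _ => i, O.unit⟩
  proj_eq : ∀ (n : ℕ) (i : Fin n),
    e (T.proj n i) = fun _ : Fin 1 => Quot.mk _ ⟨1, fun _ => i, O.unit⟩
  tuple_eq : ∀ {a n : ℕ} (fs : Fin n → T.Hom a 1),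
    e (T.tuple fs) = fun i => e (fs i) 0
  comp_eq : ∀ {n m k : ℕ} (f : T.Hom n m) (g : T.Hom m k)
    (y : Fin m → PreOp O n) (x : Fin k → PreOp O m),
    (∀ i, e f i = Quot.mk _ (y i)) → (∀ j, e g j = Quot.mk _ (x j)) →
    ∀ j, e (T.comp f g) j = Quot.mk _ (compPre O (x j) y)
/-- A family of maps `O_n → T(n,1)` which is a morphism of symmetric operads from `O`
to the operad of operations `Q(T)` of the Lawvere theory `T`. -/
def IsOperadMapToQ (O : SymOperad) (T : LawTheory)
    (h : ∀ n : ℕ, O.ops n → T.Hom n 1) : Prop :=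
  h 1 O.unit = T.id 1 ∧
  (∀ {k : ℕ} (ns : Fin k → ℕ) (gs : ∀ i, O.ops (ns i)) (f : O.ops k),
    h _ (O.comp ns gs f) = T.opComp ns (fun i => h _ (gs i)) (h k f)) ∧
  (∀ {n : ℕ} (σ : Equiv.Perm (Fin n)) (g : O.ops n),
    h n (O.act σ g) = T.opAct σ (h n g))

/-- A family of maps `T(n,1) → O_n` which is a morphism of symmetric operads from the
operad of operations `Q(T)` of the Lawvere theory `T` to `O`. -/
def IsQOperadHom (T : LawTheory) (O : SymOperad)
    (q : ∀ n : ℕ, T.Hom n 1 → O.ops n) : Prop :=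
  q 1 (T.id 1) = O.unit ∧
  (∀ {k : ℕ} (ns : Fin k → ℕ) (fs : ∀ i, T.Hom (ns i) 1) (f : T.Hom k 1),
    q _ (T.opComp ns fs f) = O.comp ns (fun i => q _ (fs i)) (q k f)) ∧
  (∀ {n : ℕ} (σ : Equiv.Perm (Fin n)) (f : T.Hom n 1),
    q n (T.opAct σ f) = O.act σ (q n f))
/-- The unit `η_O : O → Q(P(O))`, sending `g ∈ O_n` to the span `(id_n, !, g)`. -/
def SpanModel.eta {O : SymOperad} {T : LawTheory} (M : SpanModel O T)
    (n : ℕ) (g : O.ops n) : T.Hom n 1 :=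
  M.e.symm (fun _ => Quot.mk _ ⟨n, fun l => l, g⟩)

/-!
The `i`-th component of a morphism `f` of `P(O)` is `π_φ ; η g` for any span `(φ, g)`
representing `f i`, and the span model composes such operations by operadic composition; so `η`
is a morphism of operads. An operad map `h : O → Q(T')` then extends along `η` in exactly one
way, sending the class of `(φ, g)` to `π_φ ; h g`: this is well defined because `h` is
equivariant, and functorial because `h` preserves operadic composition. The counit is this
extension for the identity of `Q(T')`. Finally `η` is injective because the spans `(id, g)` and
`(id, g')` can only be identified by the trivial permutation.
-/

theorem finSigma_val : ∀ {k : ℕ} (ns : Fin k → ℕ) (p : Σ i : Fin k, Fin (ns i)),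
    (finSigma ns p : ℕ) = (∑ i, if i < p.1 then ns i else 0) + p.2
  | 0, _, p => p.1.elim0
  | k + 1, ns, ⟨i, j⟩ => by
    induction i using Fin.cases with
    | zero => simp [finSigma, finSigmaSucc]
    | succ i =>
      simp only [finSigma, finSigmaSucc, Equiv.trans_apply, Equiv.coe_fn_mk, Fin.cases_succ,
        Equiv.sumCongr_apply, Sum.map_inr, finSumFinEquiv_apply_right, finCongr_apply,
        Fin.val_cast, Fin.val_natAdd]
      rw [finSigma_val (fun t => ns t.succ) ⟨i, j⟩, Fin.sum_univ_succ]
      simp only [Fin.succ_pos, if_true, Fin.succ_lt_succ_iff]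
      omega

theorem finSigma_const_one_val {k : ℕ} (p : Σ _ : Fin k, Fin 1) :
    (finSigma (fun _ => 1) p : ℕ) = p.1 := by
  rw [finSigma_val, Finset.sum_boole, Fin.val_eq_zero p.2, add_zero, Finset.filter_gt_eq_Iio, Fin.card_Iio, Nat.cast_id]

theorem finSigma_fin_one_val {r : ℕ} (p : Σ _ : Fin 1, Fin r) :
    (finSigma (fun _ => r) p : ℕ) = p.2 := by
  simp [finSigma_val, Fin.lt_def]

namespace LawTheory

variable {T : LawTheory}

theorem comp_tuple {a b n : ℕ} (g : T.Hom a b) (fs : Fin n → T.Hom b 1) :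
    T.comp g (T.tuple fs) = T.tuple fun i => T.comp g (fs i) := by
  conv_lhs => rw [← T.tuple_eta (T.comp g (T.tuple fs))]
  simp only [T.assoc, T.tuple_proj]

theorem tuple_proj_self (n : ℕ) : T.tuple (T.proj n) = T.id n := by
  simpa only [T.id_comp] using T.tuple_eta (T.id n)

theorem pi_id (n : ℕ) : T.pi (fun i : Fin n => i) = T.id n :=
  tuple_proj_self n

theorem pi_comp_pi {n m k : ℕ} (φ : Fin m → Fin n) (ψ : Fin k → Fin m) :
    T.comp (T.pi φ) (T.pi ψ) = T.pi (φ ∘ ψ) := by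
  simp only [pi, comp_tuple, T.tuple_proj, Function.comp_apply]

theorem tuple_comp_pi {a n m : ℕ} (fs : Fin n → T.Hom a 1) (χ : Fin m → Fin n) :
    T.comp (T.tuple fs) (T.pi χ) = T.tuple (fs ∘ χ) := by
  simp only [pi, comp_tuple, T.tuple_proj, Function.comp_def]

theorem pi_comp_prodMap {n m : ℕ} (r : Fin m → ℕ) (φ : ∀ i, Fin (r i) → Fin n)
    (fs : ∀ i, T.Hom (r i) 1) :
    T.comp (T.pi fun p => φ ((finSigma r).symm p).1 ((finSigma r).symm p).2)
      (T.prodMap r fs) = T.tuple fun i => T.comp (T.pi (φ i)) (fs i) := by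
  simp only [prodMap, comp_tuple, ← T.assoc, pi_comp_pi, Function.comp_def]
  congr! 4 with i
  funext j
  exact congrArg (fun s : Σ i, Fin (r i) => φ s.1 s.2) ((finSigma r).symm_apply_apply ⟨i, j⟩)

theorem tuple_const_of_proj_eq_id (hproj : T.proj 1 0 = T.id 1) {a : ℕ} (f : T.Hom a 1) :
    T.tuple (fun _ : Fin 1 => f) = f := by
  conv_rhs => rw [← T.tuple_eta f]
  simp only [hproj, T.comp_id, Subsingleton.elim _ (0 : Fin 1)]

theorem proj_one_eq_id_of_tuple_id (h : T.tuple (fun _ : Fin 1 => T.id 1) = T.id 1) :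
    T.proj 1 0 = T.id 1 := by
  simpa only [T.tuple_proj, T.id_comp] using congrArg (T.comp · (T.proj 1 0)) h.symm

end LawTheory

namespace LawHom

variable {T T' : LawTheory} (F : LawHom T T')

theorem map_tuple {a n : ℕ} (fs : Fin n → T.Hom a 1) :
    F.map (T.tuple fs) = T'.tuple fun i => F.map (fs i) := by
  conv_lhs => rw [← T'.tuple_eta (F.map (T.tuple fs))]
  simp only [← F.map_proj, ← F.map_comp, T.tuple_proj]

theorem map_pi {n m : ℕ} (φ : Fin m → Fin n) : F.map (T.pi φ) = T'.pi φ := by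
  simp only [LawTheory.pi, map_tuple, F.map_proj]

end LawHom

namespace SymOperad

variable {O : SymOperad}

theorem act_one_perm {n : ℕ} (x : O.ops n) : O.act 1 x = x :=
  O.act_one x

theorem preRel_equivalence (n : ℕ) : Equivalence (PreRel O n) where
  refl := by
    rintro ⟨r, φ, g⟩
    exact ⟨1, by rw [inv_one, act_one_perm]; rfl⟩
  symm := by
    rintro ⟨r, φ, g⟩ _ ⟨σ, rfl⟩
    refine ⟨σ⁻¹, ?_⟩
    simp only [Function.comp_def, Equiv.Perm.coe_inv, Equiv.apply_symm_apply, inv_inv,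
      ← O.act_mul, mul_inv_cancel, act_one_perm]
    rfl
  trans := by
    rintro ⟨r, φ, g⟩ _ _ ⟨σ, rfl⟩ ⟨τ, rfl⟩
    refine ⟨σ * τ, ?_⟩
    simp only [Function.comp_def, ← O.act_mul, Equiv.Perm.coe_mul, mul_inv_rev]
    rfl

end SymOperad

theorem preOp_ext {O : SymOperad} {n r r' : ℕ} (hr : r = r') {φ : Fin r → Fin n}
    {φ' : Fin r' → Fin n} {g : O.ops r} {g' : O.ops r'}
    (hφ : ∀ j, φ j = φ' (Fin.cast hr j)) (hg : HEq g g') :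
    (⟨r, φ, g⟩ : PreOp O n) = ⟨r', φ', g'⟩ := by
  subst hr
  obtain rfl : φ = φ' := funext hφ
  rw [eq_of_heq hg]

section compPre

variable {O : SymOperad}

theorem compPre_proj {n m : ℕ} (i : Fin m) (y : Fin m → PreOp O n) :
    compPre O ⟨1, fun _ => i, O.unit⟩ y = y i := by
  change (⟨∑ _ : Fin 1, (y i).1, fun p => (y i).2.1 ((finSigma _).symm p).2,
    O.comp (fun _ => (y i).1) (fun _ => (y i).2.2) O.unit⟩ : PreOp O n) = y i
  generalize y i = q
  obtain ⟨r, φ, g⟩ := q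
  refine preOp_ext (by simp) (fun p => congrArg φ (Fin.ext ?_)) (O.comp_unit_right g)
  conv_rhs => rw [← (finSigma _).apply_symm_apply p]
  exact (finSigma_fin_one_val _).symm

theorem compPre_eta_proj {n r : ℕ} (φ : Fin r → Fin n) (g : O.ops r) :
    compPre O ⟨r, fun l => l, g⟩ (fun l => ⟨1, fun _ => φ l, O.unit⟩) = ⟨r, φ, g⟩ := by
  refine preOp_ext (by simp) (fun p => congrArg φ (Fin.ext ?_)) (O.comp_unit_left g)
  conv_rhs => rw [← (finSigma _).apply_symm_apply p]
  exact (finSigma_const_one_val _).symm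

theorem compPre_eta_blocks {k : ℕ} (ns : Fin k → ℕ) (gs : ∀ i, O.ops (ns i)) (f : O.ops k) :
    compPre O ⟨k, fun l => l, f⟩ (fun i => ⟨ns i, fun j => finSigma ns ⟨i, j⟩, gs i⟩)
      = ⟨∑ i, ns i, fun p => p, O.comp ns gs f⟩ :=
  preOp_ext rfl (fun p => (finSigma ns).apply_symm_apply p) HEq.rfl

end compPre

namespace SpanModel

variable {O : SymOperad} {T : LawTheory} (M : SpanModel O T)

theorem e_pi {n m : ℕ} (φ : Fin m → Fin n) :
    M.e (T.pi φ) = fun i => Quot.mk _ ⟨1, fun _ => φ i, O.unit⟩ := by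
  funext i
  rw [LawTheory.pi, M.tuple_eq]
  exact congrFun (M.proj_eq n (φ i)) 0

theorem e_eta {n : ℕ} (g : O.ops n) :
    M.e (M.eta n g) = fun _ => Quot.mk _ ⟨n, fun l => l, g⟩ :=
  M.e.apply_symm_apply _

theorem e_comp_eq {n m k : ℕ} (f : T.Hom n m) (g : T.Hom m k) (y : Fin m → PreOp O n)
    (x : Fin k → PreOp O m) (hy : M.e f = fun i => Quot.mk _ (y i))
    (hx : M.e g = fun j => Quot.mk _ (x j)) :
    M.e (T.comp f g) = fun j => Quot.mk _ (compPre O (x j) y) :=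
  funext (M.comp_eq f g y x (congrFun hy) (congrFun hx))

theorem e_pi_comp_eta {n r : ℕ} (φ : Fin r → Fin n) (g : O.ops r) :
    M.e (T.comp (T.pi φ) (M.eta r g)) = fun _ => Quot.mk _ ⟨r, φ, g⟩ := by
  rw [M.e_comp_eq _ _ _ _ (M.e_pi φ) (M.e_eta g), compPre_eta_proj]

theorem e_comp_proj {n m : ℕ} (f : T.Hom n m) (i : Fin m) :
    M.e (T.comp f (T.proj m i)) = fun _ => M.e f i := by
  rw [M.e_comp_eq _ _ (fun i => (M.e f i).out) _ (funext fun i => (Quot.out_eq _).symm)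
    (M.proj_eq m i)]
  exact funext fun _ => by rw [compPre_proj]; exact Quot.out_eq _

theorem comp_proj_eq_pi_comp_eta {n m : ℕ} (f : T.Hom n m) (i : Fin m) :
    T.comp f (T.proj m i)
      = T.comp (T.pi (M.e f i).out.2.1) (M.eta _ (M.e f i).out.2.2) := by
  apply M.e.injective
  rw [M.e_comp_proj, M.e_pi_comp_eta]
  exact funext fun _ => (Quot.out_eq _).symm

theorem eta_unit : M.eta 1 O.unit = T.id 1 := by
  apply M.e.injective
  rw [M.e_eta, M.id_eq]
  exact funext fun _ =>
    congrArg (Quot.mk _) (preOp_ext rfl (fun _ => Subsingleton.elim _ _) HEq.rfl)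

theorem e_prodMap_eta {k : ℕ} (ns : Fin k → ℕ) (gs : ∀ i, O.ops (ns i)) :
    M.e (T.prodMap ns fun i => M.eta (ns i) (gs i))
      = fun i => Quot.mk _ ⟨ns i, fun j => finSigma ns ⟨i, j⟩, gs i⟩ := by
  simp only [LawTheory.prodMap, M.tuple_eq, M.e_pi_comp_eta]
  rfl

theorem eta_comp {k : ℕ} (ns : Fin k → ℕ) (gs : ∀ i, O.ops (ns i)) (f : O.ops k) :
    M.eta _ (O.comp ns gs f) = T.opComp ns (fun i => M.eta _ (gs i)) (M.eta k f) := by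
  apply M.e.injective
  rw [LawTheory.opComp, M.e_comp_eq _ _ _ _ (M.e_prodMap_eta ns gs) (M.e_eta f),
    compPre_eta_blocks, M.e_eta]

theorem eta_act {n : ℕ} (σ : Equiv.Perm (Fin n)) (g : O.ops n) :
    M.eta n (O.act σ g) = T.opAct σ (M.eta n g) := by
  apply M.e.injective
  rw [LawTheory.opAct, M.e_pi_comp_eta, M.e_eta]
  funext
  exact Quot.sound ⟨σ, by rw [← O.act_mul, inv_mul_cancel, SymOperad.act_one_perm]; rfl⟩

theorem isOperadMapToQ_eta : IsOperadMapToQ O T M.eta :=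
  ⟨M.eta_unit, M.eta_comp, M.eta_act⟩

theorem eta_injective (n : ℕ) : Function.Injective (M.eta n) := by
  intro g g' hgg'
  have hspan := congrFun (M.e.symm.injective hgg') 0
  obtain ⟨σ, hσ⟩ := (SymOperad.preRel_equivalence n).eqvGen_iff.mp (Quot.eqvGen_exact hspan)
  obtain ⟨hid, rfl⟩ := Prod.ext_iff.mp (eq_of_heq (Sigma.mk.inj_iff.mp hσ).2)
  obtain rfl : σ = 1 := Equiv.ext fun l => (congrFun hid l).symm
  exact (SymOperad.act_one_perm g).symm

end SpanModel

def evalSpan {O : SymOperad} {T' : LawTheory} (h : ∀ n : ℕ, O.ops n → T'.Hom n 1) {n : ℕ}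
    (p : PreOp O n) : T'.Hom n 1 :=
  T'.comp (T'.pi p.2.1) (h p.1 p.2.2)

namespace IsOperadMapToQ

variable {O : SymOperad} {T' : LawTheory} {h : ∀ n : ℕ, O.ops n → T'.Hom n 1}

/-- The axioms of `LawTheory` only make `proj 1 0` an automorphism of `1`; it is the identity
because `h` sends `unit ∘ unit = unit` to `id`. -/
theorem proj_one_eq_id (Hh : IsOperadMapToQ O T' h) : T'.proj 1 0 = T'.id 1 := by
  apply LawTheory.proj_one_eq_id_of_tuple_id
  have hunit : (⟨_, O.comp (fun _ : Fin 1 => 1) (fun _ => O.unit) O.unit⟩ : Σ n, O.ops n)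
      = ⟨1, O.unit⟩ := Sigma.ext (by simp) (O.comp_unit_right O.unit)
  have hmap := congr_arg_heq (fun s : Σ n, O.ops n => h s.1 s.2) hunit
  simp only [Hh.2.1, Hh.1, LawTheory.opComp, LawTheory.prodMap, T'.comp_id] at hmap
  have hsubst : ∀ {N : ℕ} (_ : N = 1) (ψ : Fin 1 → Fin 1 → Fin N),
      HEq (T'.tuple fun i => T'.pi (ψ i)) (T'.id 1) → T'.tuple (fun _ => T'.id 1) = T'.id 1 := by
    rintro N rfl ψ hψ
    obtain rfl : ψ = fun _ j => j := Subsingleton.elim _ _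
    simpa only [LawTheory.pi_id, heq_iff_eq] using hψ
  exact hsubst (by simp) _ hmap

theorem evalSpan_proj (Hh : IsOperadMapToQ O T' h) {n : ℕ} (i : Fin n) :
    evalSpan h (⟨1, fun _ => i, O.unit⟩ : PreOp O n) = T'.proj n i := by
  change T'.comp (T'.pi fun _ => i) (h 1 O.unit) = _
  rw [Hh.1, T'.comp_id]
  exact LawTheory.tuple_const_of_proj_eq_id Hh.proj_one_eq_id _

theorem evalSpan_eq_of_preRel (Hh : IsOperadMapToQ O T' h) {n : ℕ} {p q : PreOp O n}
    (hpq : PreRel O n p q) : evalSpan h p = evalSpan h q := by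
  obtain ⟨σ, rfl⟩ := hpq
  dsimp only [evalSpan]
  rw [Hh.2.2, LawTheory.opAct, ← T'.assoc, LawTheory.pi_comp_pi]
  congr
  simp [Function.comp_def]

theorem evalSpan_compPre (Hh : IsOperadMapToQ O T' h) {n m : ℕ} (x : PreOp O m)
    (y : Fin m → PreOp O n) :
    evalSpan h (compPre O x y)
      = T'.comp (T'.tuple fun i => evalSpan h (y i)) (evalSpan h x) := by
  obtain ⟨k, χ, f⟩ := x
  dsimp only [evalSpan, compPre]
  rw [Hh.2.1, LawTheory.opComp, ← T'.assoc, ← T'.assoc]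
  exact congrArg (T'.comp · (h k f)) ((LawTheory.pi_comp_prodMap (fun l => (y (χ l)).1)
    (fun l => (y (χ l)).2.1) fun l => h _ (y (χ l)).2.2).trans
      (LawTheory.tuple_comp_pi (fun i => evalSpan h (y i)) χ).symm)

def liftSpan (Hh : IsOperadMapToQ O T' h) {n : ℕ} : SpanOp O n → T'.Hom n 1 :=
  Quot.lift (evalSpan h) fun _ _ => Hh.evalSpan_eq_of_preRel

theorem liftSpan_eq_evalSpan_out (Hh : IsOperadMapToQ O T' h) {n : ℕ} (q : SpanOp O n) :
    Hh.liftSpan q = evalSpan h q.out := by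
  conv_lhs => rw [← Quot.out_eq q]
  rfl

end IsOperadMapToQ

theorem LawHom.ext {T T' : LawTheory} {F G : LawHom T T'}
    (hFG : ∀ {a b : ℕ} (f : T.Hom a b), F.map f = G.map f) : F = G := by
  cases F
  cases G
  simp only [LawHom.mk.injEq]
  funext a b f
  exact hFG f

namespace SpanModel

variable {O : SymOperad} {T T' : LawTheory} (M : SpanModel O T)
  {h : ∀ n : ℕ, O.ops n → T'.Hom n 1}

def lift (Hh : IsOperadMapToQ O T' h) : LawHom T T' where
  map f := T'.tuple fun i => Hh.liftSpan (M.e f i)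
  map_id n := by
    rw [M.id_eq]
    exact (congrArg T'.tuple (funext Hh.evalSpan_proj)).trans (LawTheory.tuple_proj_self n)
  map_comp f g := by
    rw [M.e_comp_eq f g (fun i => (M.e f i).out) (fun j => (M.e g j).out)
      (funext fun _ => (Quot.out_eq _).symm) (funext fun _ => (Quot.out_eq _).symm),
      LawTheory.comp_tuple]
    simp only [Hh.liftSpan_eq_evalSpan_out]
    exact congrArg T'.tuple (funext fun j => Hh.evalSpan_compPre _ _)
  map_proj n i := by
    rw [M.proj_eq]
    exact (LawTheory.tuple_const_of_proj_eq_id Hh.proj_one_eq_id _).trans (Hh.evalSpan_proj i)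

theorem lift_map_eq (Hh : IsOperadMapToQ O T' h) {n m : ℕ} (f : T.Hom n m)
    (y : Fin m → PreOp O n) (hy : ∀ i, M.e f i = Quot.mk _ (y i)) :
    (M.lift Hh).map f = T'.tuple fun i => evalSpan h (y i) := by
  simp only [lift, hy]
  rfl

theorem lift_eta (Hh : IsOperadMapToQ O T' h) (n : ℕ) (g : O.ops n) :
    (M.lift Hh).map (M.eta n g) = h n g := by
  rw [M.lift_map_eq Hh _ _ (congrFun (M.e_eta g))]
  simp only [evalSpan, LawTheory.pi_id, T'.id_comp]
  exact LawTheory.tuple_const_of_proj_eq_id Hh.proj_one_eq_id _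

theorem eq_lift (Hh : IsOperadMapToQ O T' h) (F : LawHom T T')
    (hF : ∀ (n : ℕ) (g : O.ops n), F.map (M.eta n g) = h n g) : F = M.lift Hh := by
  refine LawHom.ext fun f => ?_
  conv_lhs => rw [← T.tuple_eta f]
  rw [F.map_tuple, M.lift_map_eq Hh f _ fun i => (Quot.out_eq (M.e f i)).symm]
  simp only [M.comp_proj_eq_pi_comp_eta, F.map_comp, F.map_pi, hF]
  rfl

end SpanModel

theorem IsOperadOf.isOperadMapToQ_cast {T : LawTheory} {S : SymOperad} (hS : IsOperadOf T S) :
    IsOperadMapToQ S T fun n x => cast (congrFun hS.1 n) x := by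
  suffices ∀ hops : S.ops = fun n => T.Hom n 1,
      IsOperadMapToQ S T fun n x => cast (congrFun hops n) x from this hS.1
  obtain ⟨ops, unit, comp, act⟩ := S
  obtain ⟨hops, hunit, hcomp, hact⟩ := hS
  change ops = _ at hops
  subst hops
  intro _
  obtain rfl := eq_of_heq hunit
  obtain rfl := eq_of_heq hcomp
  obtain rfl := eq_of_heq hact
  exact ⟨rfl, fun _ _ _ => rfl, fun _ _ => rfl⟩

/-- `P ⊣ Q`, with unit `η_O : O → Q(P(O))`, `g ↦ (id_n, !, g)` — which is
an injective morphism of operads, so `P` is faithful — satisfying the universal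
property of an adjunction, and counit `ε_T : P(Q(T)) → T` sending a span
`(φ, f, (g_i))` to `(g₁ × ⋯ × g_m) ∘ π_φ`. -/
theorem span_adjunction (O : SymOperad) (T : LawTheory) (M : SpanModel O T) :
    (∀ n : ℕ, Function.Injective (M.eta n)) ∧
    IsOperadMapToQ O T M.eta ∧
    (∀ (T' : LawTheory) (h : ∀ n : ℕ, O.ops n → T'.Hom n 1),
      IsOperadMapToQ O T' h →
      ∃! F : LawHom T T', ∀ (n : ℕ) (g : O.ops n), F.map (M.eta n g) = h n g) ∧
    (∀ (T' : LawTheory) (S' : SymOperad), IsOperadOf T' S' →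
      ∀ (T₀ : LawTheory) (M' : SpanModel S' T₀),
      ∃ ε : LawHom T₀ T',
        ∀ (n m : ℕ) (fm : T₀.Hom n m) (r : Fin m → ℕ)
          (φ : ∀ i, Fin (r i) → Fin n) (g : ∀ i, S'.ops (r i))
          (g' : ∀ i, T'.Hom (r i) 1),
          (∀ i, HEq (g i) (g' i)) →
          (∀ i, M'.e fm i = Quot.mk _ ⟨r i, φ i, g i⟩) →
          ε.map fm = T'.comp
            (T'.pi fun p : Fin (∑ i, r i) =>
              φ ((finSigma r).symm p).1 ((finSigma r).symm p).2)
            (T'.prodMap r g')) := by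
  refine ⟨M.eta_injective, M.isOperadMapToQ_eta,
    fun T' h Hh => ⟨M.lift Hh, M.lift_eta Hh, fun F hF => M.eq_lift Hh F hF⟩, ?_⟩
  intro T' S' hS' T₀ M'
  refine ⟨M'.lift hS'.isOperadMapToQ_cast, fun n m fm r φ g g' hg hfm => ?_⟩
  rw [M'.lift_map_eq _ fm _ hfm, LawTheory.pi_comp_prodMap]
  exact congrArg T'.tuple (funext fun i =>
    congrArg (T'.comp (T'.pi (φ i))) (cast_eq_iff_heq.mpr (hg i)))
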